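/- arXiv:1712.01716 — 3 statements merged into one kernel-verified Lean document; each statement's English description precedes it below -/
import Mathlib

section
/- Suppose c ∈ ℝ^m_{>0} is a complex balanced equilibrium of a reaction network with rate constants κ_k. Let θ_i : ℤ → ℝ_{≥0} satisfy θ_i(x) = 0 for x ≤ 0, θ_i(j) > 0 for all integers j ≥ 1, and θ_i(x) → ∞ as x → ∞, and let λ_k be the general intensity functions. Then ∑_{x ∈ ℤ^m_{≥0}} π_c(x) ∑_{k=1}^K λ_k(x) < ∞, where π_c is the product-form measure associated with c. (By the criterion of Anderson–Cappelletti–Koyama–Kurtz, this implies that the associated continuous-time Markov chain is non-explosive.) -/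
open Finset Filter

/-- General (non-mass action) intensity function:
`λ_k(x) = κ_k ∏_i ∏_{j=0}^{y_{ki}-1} θ_i(x_i - j)`. -/
noncomputable def genIntensity (m K : ℕ) (y : Fin K → Fin m → ℕ) (κ : Fin K → ℝ)
    (θ : Fin m → ℤ → ℝ) (k : Fin K) (x : Fin m → ℤ) : ℝ :=
  κ k * ∏ i, ∏ j ∈ Finset.range (y k i), θ i (x i - j)

/-- Product-form measure `π_c(x) = ∏_i c_i^{x_i} / ∏_{j=1}^{x_i} θ_i(j)`,
extended by `0` outside `ℤ^m_{≥0}`. -/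
noncomputable def prodForm (m : ℕ) (c : Fin m → ℝ) (θ : Fin m → ℤ → ℝ)
    (x : Fin m → ℤ) : ℝ :=
  if ∀ i, 0 ≤ x i then
    ∏ i, (c i ^ (x i).toNat / ∏ j ∈ Finset.range (x i).toNat, θ i (j + 1))
  else 0

/-- `c` is a complex balanced equilibrium: for each complex `z`,
`∑_{k : y_k' = z} κ_k c^{y_k} = ∑_{k : y_k = z} κ_k c^{y_k}`. -/
def complexBalanced (m K : ℕ) (y y' : Fin K → Fin m → ℕ) (κ : Fin K → ℝ)
    (c : Fin m → ℝ) : Prop :=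
  ∀ z : Fin m → ℕ, ((∃ k, y k = z) ∨ (∃ k, y' k = z)) →
    ∑ k ∈ Finset.univ.filter (fun k => y' k = z), κ k * ∏ i, c i ^ y k i =
    ∑ k ∈ Finset.univ.filter (fun k => y k = z), κ k * ∏ i, c i ^ y k i

/-- The stationarity equation:
`∑_k μ(x - y_k' + y_k) λ_k(x - y_k' + y_k) = μ(x) ∑_k λ_k(x)` for all `x ∈ ℤ^m_{≥0}`. -/
def stationaryEq (m K : ℕ) (y y' : Fin K → Fin m → ℕ)
    (μ : (Fin m → ℤ) → ℝ) (lam : Fin K → (Fin m → ℤ) → ℝ) : Prop :=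
  ∀ x : Fin m → ℕ,
    ∑ k : Fin K, μ (fun i => (x i : ℤ) - y' k i + y k i) *
        lam k (fun i => (x i : ℤ) - y' k i + y k i)
      = μ (fun i => (x i : ℤ)) * ∑ k : Fin K, lam k (fun i => (x i : ℤ))

/-
Writing `P_i(n) = ∏_{j=1}^{n} θ_i(j)`, the intensity `λ_k` cancels the top `y_{ki}` factors of each
`P_i(x_i)`, so `π_c(x) λ_k(x) = κ_k c^{y_k} π_c(x - y_k)` (both sides vanish unless `x ≥ y_k`, as
`θ_i(0) = 0`): the series is a finite sum of translates of `π_c`. Since `θ_i → ∞`, consecutive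
terms of `c_i^n / P_i(n)` have ratio `c_i / θ_i(n+1) → 0`, so each factor of `π_c` is summable by
the ratio test, hence so is `π_c`.
-/

lemma summable_pow_div_prod_of_tendsto_atTop {θ : ℤ → ℝ} (hθ : Tendsto θ atTop atTop) (c : ℝ) :
    Summable fun n : ℕ => c ^ n / ∏ j ∈ range n, θ (j + 1) := by
  refine summable_of_ratio_norm_eventually_le (r := 1 / 2) (by norm_num) ?_
  obtain ⟨N, hN⟩ := eventually_atTop.mp (hθ.eventually_ge_atTop (2 * |c| + 1))
  filter_upwards [eventually_ge_atTop N.toNat] with n hn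
  have hθn : 2 * |c| + 1 ≤ θ ((n : ℤ) + 1) := hN _ (by omega)
  have hθn_pos : 0 < θ ((n : ℤ) + 1) := by linarith [abs_nonneg c]
  have hratio : ‖c / θ ((n : ℤ) + 1)‖ ≤ 1 / 2 := by
    rw [Real.norm_eq_abs, abs_div, abs_of_pos hθn_pos, div_le_iff₀ hθn_pos]
    linarith
  calc ‖c ^ (n + 1) / ∏ j ∈ range (n + 1), θ (j + 1)‖
      = ‖c / θ ((n : ℤ) + 1)‖ * ‖c ^ n / ∏ j ∈ range n, θ (j + 1)‖ := by
        rw [prod_range_succ, pow_succ, mul_div_mul_comm, norm_mul, mul_comm]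
    _ ≤ 1 / 2 * ‖c ^ n / ∏ j ∈ range n, θ (j + 1)‖ := by gcongr

lemma summable_pi_prod_of_nonneg {α : Type*} {n : ℕ} (f : Fin n → α → ℝ) (hf0 : ∀ i a, 0 ≤ f i a)
    (hf : ∀ i, Summable (f i)) : Summable fun x : Fin n → α => ∏ i, f i (x i) := by
  induction n with
  | zero => exact .of_finite
  | succ n ih =>
    have htail := ih (fun i => f i.succ) (fun i => hf0 i.succ) fun i => hf i.succ
    have hpair : Summable fun p : α × (Fin n → α) => f 0 p.1 * ∏ i : Fin n, f i.succ (p.2 i) := by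
      apply Summable.mul_of_nonneg (hf 0) htail
      · exact fun a => hf0 0 a
      · exact fun v => prod_nonneg fun i _ => hf0 i.succ (v i)
    refine (Equiv.summable_iff (Fin.consEquiv fun _ => α)).mp (hpair.congr fun p => ?_)
    simp only [Function.comp_apply, Fin.consEquiv_apply, Fin.prod_univ_succ, Fin.cons_zero,
      Fin.cons_succ]

lemma prod_range_add_eq_mul_prod_sub (θ : ℤ → ℝ) (d b : ℕ) :
    ∏ j ∈ range (d + b), θ (j + 1) =
      (∏ j ∈ range d, θ (j + 1)) * ∏ j ∈ range b, θ ((d + b : ℕ) - j) := by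
  rw [prod_range_add, ← prod_range_reflect (fun j => θ ((d + b : ℕ) - j)) b]
  congr 1
  refine prod_congr rfl fun j hj => congrArg θ ?_
  have := mem_range.mp hj
  omega

lemma pow_div_prod_mul_prod_sub {θ : ℤ → ℝ} (hθpos : ∀ j : ℤ, 1 ≤ j → 0 < θ j) (c : ℝ)
    {x b : ℕ} (hbx : b ≤ x) :
    c ^ x / (∏ j ∈ range x, θ (j + 1)) * ∏ j ∈ range b, θ (x - j) =
      c ^ b * (c ^ (x - b) / ∏ j ∈ range (x - b), θ (j + 1)) := by
  obtain ⟨d, rfl⟩ : ∃ d, x = d + b := ⟨x - b, by omega⟩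
  have htop : ∏ j ∈ range b, θ ((d + b : ℕ) - j) ≠ 0 :=
    (prod_pos fun j hj => hθpos _ (by have := mem_range.mp hj; omega)).ne'
  rw [prod_range_add_eq_mul_prod_sub, Nat.add_sub_cancel, pow_add]
  field_simp

lemma prod_range_sub_eq_zero {θ : ℤ → ℝ} (hθ0 : ∀ x : ℤ, x ≤ 0 → θ x = 0) {x b : ℕ}
    (hxb : x < b) : ∏ j ∈ range b, θ (x - j) = 0 :=
  prod_eq_zero (mem_range.mpr hxb) (hθ0 _ (by simp))

section ProductForm

variable {m : ℕ} {c : Fin m → ℝ} {θ : Fin m → ℤ → ℝ}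

lemma prodForm_natCast (x : Fin m → ℕ) :
    prodForm m c θ (fun i => (x i : ℤ)) = ∏ i, c i ^ x i / ∏ j ∈ range (x i), θ i (j + 1) := by
  simp [prodForm]

lemma prodForm_sub_eq_zero {x v : Fin m → ℕ} (h : ∃ i, x i < v i) :
    prodForm m c θ (fun i => (x i : ℤ) - v i) = 0 := by
  obtain ⟨i, hi⟩ := h
  exact if_neg (not_forall.mpr ⟨i, by dsimp only; omega⟩)

lemma summable_prodForm_natCast (hθlim : ∀ i, Tendsto (θ i) atTop atTop) :
    Summable fun x : Fin m → ℕ => prodForm m c θ (fun i => (x i : ℤ)) := by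
  simp only [prodForm_natCast]
  refine Summable.of_norm ?_
  simp only [norm_prod]
  exact summable_pi_prod_of_nonneg (fun i n => ‖c i ^ n / ∏ j ∈ range n, θ i (j + 1)‖)
    (fun _ _ => norm_nonneg _)
    fun i => (summable_pow_div_prod_of_tendsto_atTop (hθlim i) (c i)).norm

lemma summable_prodForm_sub (hθlim : ∀ i, Tendsto (θ i) atTop atTop) (v : Fin m → ℕ) :
    Summable fun x : Fin m → ℕ => prodForm m c θ (fun i => (x i : ℤ) - v i) := by
  have hinj : Function.Injective fun x : Fin m → ℕ => x + v := add_left_injective v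
  refine (hinj.summable_iff (f := fun x : Fin m → ℕ => prodForm m c θ (fun i => (x i : ℤ) - v i))
    fun x hx => prodForm_sub_eq_zero ?_).mp ?_
  · by_contra! hvx
    exact hx ⟨x - v, funext fun i => by simp [Nat.sub_add_cancel (hvx i)]⟩
  · simpa [Function.comp_def] using summable_prodForm_natCast hθlim

lemma prodForm_mul_genIntensity {K : ℕ} (y : Fin K → Fin m → ℕ) (κ : Fin K → ℝ)
    (hθ0 : ∀ i, ∀ x : ℤ, x ≤ 0 → θ i x = 0) (hθpos : ∀ i, ∀ j : ℤ, 1 ≤ j → 0 < θ i j)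
    (k : Fin K) (x : Fin m → ℕ) :
    prodForm m c θ (fun i => (x i : ℤ)) * genIntensity m K y κ θ k (fun i => (x i : ℤ)) =
      κ k * (∏ i, c i ^ y k i) * prodForm m c θ (fun i => (x i : ℤ) - y k i) := by
  by_cases hyx : ∀ i, y k i ≤ x i
  · have hsub : (fun i => (x i : ℤ) - y k i) = fun i => ((x i - y k i : ℕ) : ℤ) := by
      funext i
      have := hyx i
      omega
    rw [hsub, prodForm_natCast, prodForm_natCast, genIntensity, mul_left_comm, ← prod_mul_distrib,
      mul_assoc, ← prod_mul_distrib]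
    exact congrArg _ (prod_congr rfl fun i _ => pow_div_prod_mul_prod_sub (hθpos i) (c i) (hyx i))
  · obtain ⟨i, hi⟩ := not_forall.mp hyx
    rw [prodForm_sub_eq_zero ⟨i, not_le.mp hi⟩, genIntensity,
      prod_eq_zero (mem_univ i) (prod_range_sub_eq_zero (hθ0 i) (not_le.mp hi))]
    simp

end ProductForm

theorem stmt3_general (m K : ℕ) (y : Fin K → Fin m → ℕ) (κ : Fin K → ℝ)
    (c : Fin m → ℝ) (θ : Fin m → ℤ → ℝ)
    (hθ0 : ∀ i, ∀ x : ℤ, x ≤ 0 → θ i x = 0)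
    (hθpos : ∀ i, ∀ j : ℤ, 1 ≤ j → 0 < θ i j)
    (hθlim : ∀ i, Filter.Tendsto (θ i) Filter.atTop Filter.atTop) :
    Summable (fun x : Fin m → ℕ =>
      prodForm m c θ (fun i => (x i : ℤ)) *
        ∑ k : Fin K, genIntensity m K y κ θ k (fun i => (x i : ℤ))) := by
  have hshifted (k : Fin K) : Summable fun x : Fin m → ℕ =>
      κ k * (∏ i, c i ^ y k i) * prodForm m c θ (fun i => (x i : ℤ) - y k i) :=
    (summable_prodForm_sub hθlim (y k)).mul_left _
  refine (summable_sum (s := univ) fun k _ => hshifted k).congr fun x => ?_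
  rw [mul_sum]
  exact sum_congr rfl fun k _ => (prodForm_mul_genIntensity y κ hθ0 hθpos k x).symm

/-- If `c` is a complex balanced equilibrium and each `θ_i → ∞`,
then `∑_{x ∈ ℤ^m_{≥0}} π_c(x) ∑_k λ_k(x) < ∞` (the non-explosivity criterion of
Anderson–Cappelletti–Koyama–Kurtz). -/
theorem stmt3 (m K : ℕ) (y y' : Fin K → Fin m → ℕ) (κ : Fin K → ℝ)
    (c : Fin m → ℝ) (θ : Fin m → ℤ → ℝ)
    (hyy' : ∀ k, y k ≠ y' k) (hκ : ∀ k, 0 < κ k) (hc : ∀ i, 0 < c i)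
    (hθnn : ∀ i x, 0 ≤ θ i x)
    (hθ0 : ∀ i, ∀ x : ℤ, x ≤ 0 → θ i x = 0)
    (hθpos : ∀ i, ∀ j : ℤ, 1 ≤ j → 0 < θ i j)
    (hθlim : ∀ i, Filter.Tendsto (θ i) Filter.atTop Filter.atTop)
    (hcb : complexBalanced m K y y' κ c) :
    Summable (fun x : Fin m → ℕ =>
      prodForm m c θ (fun i => (x i : ℤ)) *
        ∑ k : Fin K, genIntensity m K y κ θ k (fun i => (x i : ℤ))) :=
  stmt3_general m K y κ c θ hθ0 hθpos hθlim
end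

section
/- Suppose c ∈ ℝ^m_{>0} is a complex balanced equilibrium of a reaction network with rate constants κ_k. Let θ_i : ℤ → ℝ_{≥0} satisfy θ_i(x) = 0 for x ≤ 0 and θ_i(j) > 0 for all integers j ≥ 1. Fix d ∈ ℝ^m and V > 0, and define scaled rate constants κ_k^V = κ_k / V^{d·y_k − 1} and scaled intensities λ_k^V(x) = κ_k^V ∏_{i=1}^m ∏_{j=0}^{y_{ki}−1} θ_i(x_i − j). Then π_*^V(x) = ∏_{i=1}^m (V^{d_i} c_i)^{x_i} / ∏_{j=1}^{x_i} θ_i(j) (extended by 0 outside ℤ^m_{≥0}) is a stationary measure: for every x ∈ ℤ^m_{≥0}, ∑_{k=1}^K π_*^V(x − y_k' + y_k) λ_k^V(x − y_k' + y_k) = π_*^V(x) ∑_{k=1}^K λ_k^V(x). -/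
open Finset Filter

/-!
The generalized factorials `∏_{j ≤ x_i} θ_i(j)` in `π_*^V` cancel against the falling products in
the intensities: `π_*^V(w) λ_k^V(w) = V κ_k c^{y_k} π_*^V(w - y_k)` for every `w ∈ ℤ^m`, where
`θ_i(0) = 0` makes both sides vanish when `w - y_k` leaves `ℤ^m_{≥0}`. At `w = x - y_k' + y_k` and
at `w = x` the two sides of the stationarity equation become `∑_k κ_k c^{y_k} g(y_k')` and
`∑_k κ_k c^{y_k} g(y_k)` with `g(z) = V π_*^V(x - z)`; grouping the reactions by complex, these
agree by complex balance.
-/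

noncomputable def prodFormCoord (c : ℝ) (θ : ℤ → ℝ) (x : ℤ) : ℝ :=
  if 0 ≤ x then c ^ x.toNat / ∏ j ∈ range x.toNat, θ (j + 1) else 0

lemma prodForm_eq_prod_prodFormCoord (m : ℕ) (c : Fin m → ℝ) (θ : Fin m → ℤ → ℝ)
    (x : Fin m → ℤ) : prodForm m c θ x = ∏ i, prodFormCoord (c i) (θ i) (x i) := by
  unfold prodForm
  split_ifs with hx
  · exact prod_congr rfl fun i _ => (if_pos (hx i)).symm
  · obtain ⟨i, hi⟩ := not_forall.mp hx
    exact (prod_eq_zero (mem_univ i) (if_neg hi)).symm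

lemma prod_range_sub_mul_prod_range_succ (θ : ℤ → ℝ) (n b : ℕ) :
    (∏ j ∈ range b, θ ((n + b : ℕ) - j)) * ∏ j ∈ range n, θ (j + 1)
      = ∏ j ∈ range (n + b), θ (j + 1) := by
  induction b with
  | zero => simp
  | succ b ih =>
    rw [prod_range_succ', ← add_assoc, prod_range_succ, ← ih]
    push_cast
    ring_nf

lemma prodFormCoord_mul_prod_range (c : ℝ) (θ : ℤ → ℝ) (hθ0 : θ 0 = 0)
    (hθpos : ∀ j : ℤ, 1 ≤ j → 0 < θ j) (x : ℤ) (b : ℕ) :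
    prodFormCoord c θ x * ∏ j ∈ range b, θ (x - j) = c ^ b * prodFormCoord c θ (x - b) := by
  have hfact : ∀ n : ℕ, ∏ j ∈ range n, θ (j + 1) ≠ 0 := fun n =>
    (prod_pos fun j _ => hθpos _ (by omega)).ne'
  unfold prodFormCoord
  by_cases hxb : 0 ≤ x - b
  · obtain ⟨n, hn⟩ : ∃ n : ℕ, x = (n + b : ℕ) := ⟨(x - b).toNat, by omega⟩
    have hfalling : ∏ j ∈ range b, θ ((n + b : ℕ) - j) ≠ 0 :=
      (prod_pos fun j hj => hθpos _ (by have := mem_range.mp hj; omega)).ne'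
    subst hn
    rw [if_pos (by omega), if_pos hxb, show ((n + b : ℕ) - b : ℤ).toNat = n by omega,
      Int.toNat_natCast, ← prod_range_sub_mul_prod_range_succ θ n b, pow_add]
    field_simp
  · rw [if_neg hxb, mul_zero]
    by_cases hx : 0 ≤ x
    · -- the factor `j = x` of the falling product is `θ 0 = 0`
      refine mul_eq_zero_of_right _ (prod_eq_zero (i := x.toNat) (mem_range.mpr (by omega)) ?_)
      rw [show x - x.toNat = 0 by omega, hθ0]
    · rw [if_neg hx, zero_mul]

lemma prodForm_mul_prod_prod_range (m : ℕ) (c : Fin m → ℝ) (θ : Fin m → ℤ → ℝ)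
    (hθ0 : ∀ i, ∀ x : ℤ, x ≤ 0 → θ i x = 0) (hθpos : ∀ i, ∀ j : ℤ, 1 ≤ j → 0 < θ i j)
    (x : Fin m → ℤ) (z : Fin m → ℕ) :
    prodForm m c θ x * ∏ i, ∏ j ∈ range (z i), θ i (x i - j)
      = (∏ i, c i ^ z i) * prodForm m c θ (fun i => x i - z i) := by
  simp only [prodForm_eq_prod_prodFormCoord, ← prod_mul_distrib]
  exact prod_congr rfl fun i _ =>
    prodFormCoord_mul_prod_range (c i) (θ i) (hθ0 i 0 le_rfl) (hθpos i) (x i) (z i)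

lemma div_rpow_mul_prod_rpow_mul_pow (m : ℕ) (κ V : ℝ) (hV : 0 < V) (d c : Fin m → ℝ)
    (z : Fin m → ℕ) :
    κ / V ^ ((∑ i, d i * (z i : ℝ)) - 1) * ∏ i, (V ^ d i * c i) ^ z i
      = V * (κ * ∏ i, c i ^ z i) := by
  have hscale : ∏ i, (V ^ d i * c i) ^ z i = V ^ (∑ i, d i * (z i : ℝ)) * ∏ i, c i ^ z i := by
    rw [Real.rpow_sum_of_pos hV, ← prod_mul_distrib]
    refine prod_congr rfl fun i _ => ?_
    rw [mul_pow, ← Real.rpow_natCast (V ^ d i), ← Real.rpow_mul hV.le]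
  have hpos : 0 < V ^ (∑ i, d i * (z i : ℝ)) := Real.rpow_pos_of_pos hV _
  rw [hscale, Real.rpow_sub hV, Real.rpow_one]
  field_simp

lemma prodForm_mul_genIntensity_scaled (m K : ℕ) (y : Fin K → Fin m → ℕ) (κ : Fin K → ℝ)
    (c : Fin m → ℝ) (θ : Fin m → ℤ → ℝ)
    (hθ0 : ∀ i, ∀ x : ℤ, x ≤ 0 → θ i x = 0) (hθpos : ∀ i, ∀ j : ℤ, 1 ≤ j → 0 < θ i j)
    (d : Fin m → ℝ) (V : ℝ) (hV : 0 < V) (k : Fin K) (w : Fin m → ℤ) :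
    prodForm m (fun i => V ^ d i * c i) θ w *
        genIntensity m K y (fun k => κ k / V ^ ((∑ i, d i * (y k i : ℝ)) - 1)) θ k w
      = V * (κ k * ∏ i, c i ^ y k i) *
          prodForm m (fun i => V ^ d i * c i) θ (fun i => w i - y k i) := by
  rw [genIntensity, mul_left_comm, prodForm_mul_prod_prod_range m _ θ hθ0 hθpos,
    ← mul_assoc, div_rpow_mul_prod_rpow_mul_pow m _ V hV d c]

lemma sum_mul_comp_eq_sum_fiber_mul {ι α : Type*} [DecidableEq α] (s : Finset ι)
    (t : Finset α) (e : ι → α) (he : ∀ k ∈ s, e k ∈ t) (f : ι → ℝ) (g : α → ℝ) :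
    ∑ k ∈ s, f k * g (e k) = ∑ z ∈ t, (∑ k ∈ s with e k = z, f k) * g z := by
  rw [← sum_fiberwise_of_maps_to he]
  refine sum_congr rfl fun z _ => ?_
  rw [sum_mul]
  exact sum_congr rfl fun k hk => by rw [(mem_filter.mp hk).2]

lemma complexBalanced.sum_mul_product_eq_sum_mul_source {m K : ℕ} {y y' : Fin K → Fin m → ℕ}
    {κ : Fin K → ℝ} {c : Fin m → ℝ} (hcb : complexBalanced m K y y' κ c)
    (g : (Fin m → ℕ) → ℝ) :
    ∑ k, (κ k * ∏ i, c i ^ y k i) * g (y' k) = ∑ k, (κ k * ∏ i, c i ^ y k i) * g (y k) := by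
  classical
  set complexes := univ.image y ∪ univ.image y'
  rw [sum_mul_comp_eq_sum_fiber_mul univ complexes y' (by simp [complexes]),
    sum_mul_comp_eq_sum_fiber_mul univ complexes y (by simp [complexes])]
  refine sum_congr rfl fun z hz => ?_
  rw [hcb z (by simpa [complexes] using hz)]

theorem stmt11_general (m K : ℕ) (y y' : Fin K → Fin m → ℕ) (κ : Fin K → ℝ)
    (c : Fin m → ℝ) (θ : Fin m → ℤ → ℝ)
    (hθ0 : ∀ i, ∀ x : ℤ, x ≤ 0 → θ i x = 0)
    (hθpos : ∀ i, ∀ j : ℤ, 1 ≤ j → 0 < θ i j)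
    (hcb : complexBalanced m K y y' κ c)
    (d : Fin m → ℝ) (V : ℝ) (hV : 0 < V) :
    stationaryEq m K y y'
      (prodForm m (fun i => V ^ (d i) * c i) θ)
      (genIntensity m K y
        (fun k => κ k / V ^ ((∑ i, d i * (y k i : ℝ)) - 1)) θ) := by
  intro x
  simp only [mul_sum, prodForm_mul_genIntensity_scaled m K y κ c θ hθ0 hθpos d V hV,
    add_sub_cancel_right]
  convert hcb.sum_mul_product_eq_sum_mul_source
    (fun z => V * prodForm m (fun i => V ^ d i * c i) θ (fun i => x i - z i)) using 2 <;> ring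

/-- (Modified scaling, stationary measure.) If `c` is a complex
balanced equilibrium, then for any `d ∈ ℝ^m` and `V > 0`, the measure
`π_*^V(x) = ∏_i (V^{d_i} c_i)^{x_i} / ∏_{j=1}^{x_i} θ_i(j)` satisfies the stationarity
equation for the model with scaled rate constants `κ_k^V = κ_k / V^{d·y_k - 1}`. -/
theorem stmt11 (m K : ℕ) (y y' : Fin K → Fin m → ℕ) (κ : Fin K → ℝ)
    (c : Fin m → ℝ) (θ : Fin m → ℤ → ℝ)
    (hyy' : ∀ k, y k ≠ y' k) (hκ : ∀ k, 0 < κ k) (hc : ∀ i, 0 < c i)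
    (hθnn : ∀ i x, 0 ≤ θ i x)
    (hθ0 : ∀ i, ∀ x : ℤ, x ≤ 0 → θ i x = 0)
    (hθpos : ∀ i, ∀ j : ℤ, 1 ≤ j → 0 < θ i j)
    (hcb : complexBalanced m K y y' κ c)
    (d : Fin m → ℝ) (V : ℝ) (hV : 0 < V) :
    stationaryEq m K y y'
      (prodForm m (fun i => V ^ (d i) * c i) θ)
      (genIntensity m K y
        (fun k => κ k / V ^ ((∑ i, d i * (y k i : ℝ)) - 1)) θ) :=
  stmt11_general m K y y' κ c θ hθ0 hθpos hcb d V hV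
end

section
/- Suppose c ∈ ℝ^m_{>0} is a complex balanced equilibrium of a reaction network with rate constants κ_k. Let d, A ∈ ℝ^m_{>0}, set c̃_i = (c_i/A_i)^{1/d_i}, and define 𝒱 : ℝ^m_{>0} → ℝ by 𝒱(x) = ∑_{i=1}^m [ x_i (d_i ln x_i − ln c_i − d_i + ln A_i) + d_i (c_i/A_i)^{1/d_i} ]. Then: (1) 𝒱(c̃) = 0 and 𝒱(x) > 0 for every x ∈ ℝ^m_{>0} with x ≠ c̃; (2) for every x ∈ ℝ^m_{>0}, ∇𝒱(x)·f(x) = ∑_{k=1}^K κ_k (A x^d)^{y_k} ∑_{i=1}^m (d_i ln x_i − ln c_i + ln A_i)(y'_{ki} − y_{ki}) ≤ 0, where f(x) = ∑_k κ_k (A x^d)^{y_k}(y_k' − y_k) and (A x^d)^{y} = ∏_i (A_i x_i^{d_i})^{y_i}. Hence 𝒱 is a Lyapunov function for the system ẋ = f(x). -/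
open Finset Filter

/-! Each summand of `𝒱` is `d_i c̃_i klFun (x_i / c̃_i)` with `klFun u = u log u + 1 - u ≥ 0`,
vanishing only at `u = 1`; this gives (1). For (2), write `A_i x_i^{d_i} = c_i e^{w_i}` with
`w_i = d_i ln x_i - ln c_i + ln A_i`. Convexity of `exp` bounds the `k`-th term by
`κ_k c^{y_k} (e^{⟨y_k', w⟩} - e^{⟨y_k, w⟩})`, and complex balancing makes the sum of these
bounds vanish, since it weights each complex equally as a product and as a source. -/

open InformationTheory Real

lemma mul_log_sub_add_eq_mul_klFun {x c d A : ℝ} (hx : 0 < x) (hc : 0 < c) (hA : 0 < A)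
    (hd : d ≠ 0) :
    x * (d * log x - log c - d + log A) + d * (c / A) ^ (1 / d)
      = d * (c / A) ^ (1 / d) * klFun (x / (c / A) ^ (1 / d)) := by
  have hcA : 0 < c / A := div_pos hc hA
  have hpos : 0 < (c / A) ^ (1 / d) := rpow_pos_of_pos hcA _
  have hlog : d * log ((c / A) ^ (1 / d)) = log c - log A := by
    rw [log_rpow hcA, log_div hc.ne' hA.ne']
    field_simp
  rw [klFun, log_div hx.ne' hpos.ne']
  field_simp
  linear_combination x * hlog

lemma mul_rpow_eq_mul_exp {x c d A : ℝ} (hx : 0 < x) (hc : 0 < c) (hA : 0 < A) :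
    A * x ^ d = c * exp (d * log x - log c + log A) := by
  rw [exp_add, exp_sub, exp_log hc, exp_log hA, rpow_def_of_pos hx, mul_comm d]
  field_simp

lemma exp_mul_sub_le_exp_sub_exp (s t : ℝ) : exp s * (t - s) ≤ exp t - exp s := by
  have h : exp t = exp s * exp (t - s) := by rw [← exp_add, add_sub_cancel]
  nlinarith [add_one_le_exp (t - s), exp_pos s]

lemma Finset.sum_mul_comp_eq_sum_fiber {ι α R : Type*} [DecidableEq α] [CommSemiring R]
    {s : Finset ι} {t : Finset α} {φ : ι → α} (h : ∀ i ∈ s, φ i ∈ t) (w : ι → R) (g : α → R) :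
    ∑ i ∈ s, w i * g (φ i) = ∑ z ∈ t, (∑ i ∈ s with φ i = z, w i) * g z := by
  rw [← sum_fiberwise_of_maps_to h]
  refine sum_congr rfl fun z _ => ?_
  rw [sum_mul]
  exact sum_congr rfl fun i hi => by rw [(mem_filter.mp hi).2]

namespace complexBalanced

variable {m K : ℕ} {y y' : Fin K → Fin m → ℕ} {κ : Fin K → ℝ} {c : Fin m → ℝ}

lemma sum_mul_comp_product_eq (hcb : complexBalanced m K y y' κ c) (g : (Fin m → ℕ) → ℝ) :
    ∑ k, κ k * (∏ i, c i ^ y k i) * g (y' k) = ∑ k, κ k * (∏ i, c i ^ y k i) * g (y k) := by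
  classical
  set T := univ.image y ∪ univ.image y'
  rw [sum_mul_comp_eq_sum_fiber (t := T) (φ := y') (by simp [T]),
    sum_mul_comp_eq_sum_fiber (t := T) (φ := y) (by simp [T])]
  refine sum_congr rfl fun z hz => ?_
  rw [hcb z (by simpa [T, eq_comm] using hz)]

lemma sum_mul_exp_mul_sum_le_zero (hcb : complexBalanced m K y y' κ c) (hκ : ∀ k, 0 ≤ κ k)
    (hc : ∀ i, 0 ≤ c i) (w : Fin m → ℝ) :
    ∑ k, κ k * ((∏ i, c i ^ y k i) * exp (∑ i, (y k i : ℝ) * w i)) *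
      ∑ i, w i * ((y' k i : ℝ) - y k i) ≤ 0 := by
  set E : (Fin m → ℕ) → ℝ := fun z => exp (∑ i, (z i : ℝ) * w i)
  have hterm : ∀ k, κ k * ((∏ i, c i ^ y k i) * E (y k)) * ∑ i, w i * ((y' k i : ℝ) - y k i)
      ≤ κ k * (∏ i, c i ^ y k i) * E (y' k) - κ k * (∏ i, c i ^ y k i) * E (y k) := by
    intro k
    have hinner : ∑ i, w i * ((y' k i : ℝ) - y k i)
        = ∑ i, (y' k i : ℝ) * w i - ∑ i, (y k i : ℝ) * w i := by
      rw [← sum_sub_distrib]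
      exact sum_congr rfl fun i _ => by ring
    have hweight : 0 ≤ κ k * ∏ i, c i ^ y k i :=
      mul_nonneg (hκ k) (prod_nonneg fun i _ => pow_nonneg (hc i) _)
    rw [hinner]
    linear_combination mul_le_mul_of_nonneg_left
      (exp_mul_sub_le_exp_sub_exp (∑ i, (y k i : ℝ) * w i) (∑ i, (y' k i : ℝ) * w i)) hweight
  calc _ ≤ ∑ k, (κ k * (∏ i, c i ^ y k i) * E (y' k) - κ k * (∏ i, c i ^ y k i) * E (y k)) :=
        sum_le_sum fun k _ => hterm k
    _ = 0 := by rw [sum_sub_distrib, hcb.sum_mul_comp_product_eq E, sub_self]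

end complexBalanced

lemma prod_mul_rpow_pow_eq_mul_exp {m : ℕ} {x c d A : Fin m → ℝ} (hx : ∀ i, 0 < x i)
    (hc : ∀ i, 0 < c i) (hA : ∀ i, 0 < A i) (z : Fin m → ℕ) :
    ∏ i, (A i * x i ^ d i) ^ z i = (∏ i, c i ^ z i) *
      exp (∑ i, (z i : ℝ) * (d i * log (x i) - log (c i) + log (A i))) := by
  rw [exp_sum, ← prod_mul_distrib]
  refine prod_congr rfl fun i _ => ?_
  rw [mul_rpow_eq_mul_exp (hx i) (hc i) (hA i), mul_pow, ← exp_nat_mul]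

theorem stmt14_general (m K : ℕ) (y y' : Fin K → Fin m → ℕ) (κ : Fin K → ℝ)
    (c d A : Fin m → ℝ)
    (hκ : ∀ k, 0 < κ k) (hc : ∀ i, 0 < c i)
    (hd : ∀ i, 0 < d i) (hA : ∀ i, 0 < A i)
    (hcb : complexBalanced m K y y' κ c) :
    ((∑ i, (((c i / A i) ^ (1 / d i)) *
        (d i * Real.log ((c i / A i) ^ (1 / d i)) - Real.log (c i) - d i + Real.log (A i))
        + d i * (c i / A i) ^ (1 / d i))) = 0 ∧
      ∀ x : Fin m → ℝ, (∀ i, 0 < x i) →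
        x ≠ (fun i => (c i / A i) ^ (1 / d i)) →
        0 < ∑ i, (x i *
          (d i * Real.log (x i) - Real.log (c i) - d i + Real.log (A i))
          + d i * (c i / A i) ^ (1 / d i))) ∧
    ∀ x : Fin m → ℝ, (∀ i, 0 < x i) →
      ∑ k : Fin K, κ k * (∏ i, (A i * x i ^ (d i)) ^ y k i) *
        ∑ i, (d i * Real.log (x i) - Real.log (c i) + Real.log (A i)) *
          ((y' k i : ℝ) - (y k i : ℝ)) ≤ 0 := by
  have hĉ : ∀ i, 0 < (c i / A i) ^ (1 / d i) := fun i => rpow_pos_of_pos (div_pos (hc i) (hA i)) _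
  have hsummand := fun x (hx : 0 < x) i => mul_log_sub_add_eq_mul_klFun hx (hc i) (hA i) (hd i).ne'
  refine ⟨⟨?_, fun x hx hxĉ => ?_⟩, fun x hx => ?_⟩
  · refine sum_eq_zero fun i _ => ?_
    rw [hsummand _ (hĉ i) i, div_self (hĉ i).ne', klFun_one, mul_zero]
  · obtain ⟨i₀, hi₀⟩ := Function.ne_iff.mp hxĉ
    have hratio := fun i => (div_pos (hx i) (hĉ i)).le
    simp only [hsummand _ (hx _)]
    refine sum_pos' (fun i _ => mul_nonneg (mul_pos (hd i) (hĉ i)).le (klFun_nonneg (hratio i)))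
      ⟨i₀, mem_univ _, mul_pos (mul_pos (hd i₀) (hĉ i₀)) ?_⟩
    refine (klFun_nonneg (hratio i₀)).lt_of_ne' fun h => hi₀ ?_
    rwa [klFun_eq_zero_iff (hratio i₀), div_eq_one_iff_eq (hĉ i₀).ne'] at h
  · simpa only [prod_mul_rpow_pow_eq_mul_exp hx hc hA] using
      hcb.sum_mul_exp_mul_sum_le_zero (fun k => (hκ k).le) (fun i => (hc i).le)
        fun i => d i * log (x i) - log (c i) + log (A i)

/-- (Lyapunov property.) If `c` is a complex balanced equilibrium,
`d, A ∈ ℝ^m_{>0}` and `c̃_i = (c_i/A_i)^{1/d_i}`, then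
`𝒱(x) = ∑_i [x_i(d_i ln x_i - ln c_i - d_i + ln A_i) + d_i (c_i/A_i)^{1/d_i}]`
vanishes at `c̃`, is positive elsewhere on `ℝ^m_{>0}`, and satisfies
`∇𝒱(x)·f(x) ≤ 0` for the generalized system `ẋ = ∑_k κ_k (A x^d)^{y_k}(y_k'-y_k)`. -/
theorem stmt14 (m K : ℕ) (y y' : Fin K → Fin m → ℕ) (κ : Fin K → ℝ)
    (c d A : Fin m → ℝ)
    (hyy' : ∀ k, y k ≠ y' k) (hκ : ∀ k, 0 < κ k) (hc : ∀ i, 0 < c i)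
    (hd : ∀ i, 0 < d i) (hA : ∀ i, 0 < A i)
    (hcb : complexBalanced m K y y' κ c) :
    ((∑ i, (((c i / A i) ^ (1 / d i)) *
        (d i * Real.log ((c i / A i) ^ (1 / d i)) - Real.log (c i) - d i + Real.log (A i))
        + d i * (c i / A i) ^ (1 / d i))) = 0 ∧
      ∀ x : Fin m → ℝ, (∀ i, 0 < x i) →
        x ≠ (fun i => (c i / A i) ^ (1 / d i)) →
        0 < ∑ i, (x i *
          (d i * Real.log (x i) - Real.log (c i) - d i + Real.log (A i))
          + d i * (c i / A i) ^ (1 / d i))) ∧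
    ∀ x : Fin m → ℝ, (∀ i, 0 < x i) →
      ∑ k : Fin K, κ k * (∏ i, (A i * x i ^ (d i)) ^ y k i) *
        ∑ i, (d i * Real.log (x i) - Real.log (c i) + Real.log (A i)) *
          ((y' k i : ℝ) - (y k i : ℝ)) ≤ 0 :=
  stmt14_general m K y y' κ c d A hκ hc hd hA hcb
end
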